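/- arXiv:2006.05087 — 3 statements merged into one kernel-verified Lean document; each statement's English description precedes it below -/
import Mathlib

section
/- Let f : ℝ^d → ℝ be smooth, Σ : ℝ^d → ℝ^{d×d} a smooth symmetric positive-definite matrix field, and consider the drift s(θ) = -P(θ)∇f(θ) with diffusion matrix D(θ) = η P(θ)² Σ(θ), where P(θ) is symmetric positive definite. If ∇ᵀ(Σ(θ)⁻¹) = 0 (each column divergence of Σ⁻¹ vanishes) and η P(θ) = Σ(θ)⁻¹ for all θ, then ρ(θ) ∝ exp(-f(θ)) satisfies the stationary Fokker–Planck equation Tr{∇[-s(θ)ᵀρ(θ) + η ∇ᵀ(P(θ)²Σ(θ) ρ(θ))]} = 0. -/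
open Matrix Real

/-- Partial derivative in the `i`-th coordinate direction. -/
noncomputable def pd {d : ℕ} (i : Fin d) (g : (Fin d → ℝ) → ℝ) (θ : Fin d → ℝ) : ℝ :=
  fderiv ℝ g θ (Pi.single i 1)

lemma pd_const_mul {d : ℕ} (i : Fin d) (c : ℝ) (g : (Fin d → ℝ) → ℝ) (x : Fin d → ℝ)
    (hg : DifferentiableAt ℝ g x) :
    pd i (fun y => c * g y) x = c * pd i g x := by
  simp [pd, fderiv_const_mul hg]

lemma pd_mul {d : ℕ} (i : Fin d) (a b : (Fin d → ℝ) → ℝ) (x : Fin d → ℝ)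
    (ha : DifferentiableAt ℝ a x) (hb : DifferentiableAt ℝ b x) :
    pd i (fun y => a y * b y) x = pd i a x * b x + a x * pd i b x := by
  simp only [pd]
  have h : HasFDerivAt (fun y => a y * b y) (a x • fderiv ℝ b x + b x • fderiv ℝ a x) x :=
    ha.hasFDerivAt.mul hb.hasFDerivAt
  rw [h.fderiv]
  simp only [ContinuousLinearMap.add_apply, ContinuousLinearMap.smul_apply, smul_eq_mul]
  ring

/-- Theorem 1: if the column divergences of `Σ⁻¹` vanish and `η P = Σ⁻¹`, then
`ρ(θ) = exp(-f(θ))` satisfies the stationary Fokker–Planck equation for the SDE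
`dθ = -P ∇f dt + √(2 η P² Σ) dW`. -/
theorem stmt0 {d : ℕ} (η : ℝ) (hη : 0 < η)
    (f : (Fin d → ℝ) → ℝ) (hf : ContDiff ℝ (⊤ : ℕ∞) f)
    (Sg P : (Fin d → ℝ) → Matrix (Fin d) (Fin d) ℝ)
    (hSgsmooth : ∀ i j, ContDiff ℝ (⊤ : ℕ∞) (fun θ => Sg θ i j))
    (hPsmooth : ∀ i j, ContDiff ℝ (⊤ : ℕ∞) (fun θ => P θ i j))
    (hSgsym : ∀ θ, (Sg θ).IsSymm) (hSgpd : ∀ θ, (Sg θ).PosDef)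
    (hPsym : ∀ θ, (P θ).IsSymm) (hPpd : ∀ θ, (P θ).PosDef)
    (hdiv : ∀ θ (j : Fin d), ∑ i : Fin d, pd i (fun x => (Sg x)⁻¹ i j) θ = 0)
    (hprec : ∀ θ, η • P θ = (Sg θ)⁻¹) :
    ∀ θ, ∑ i : Fin d,
      pd i (fun x =>
        -((-((P x).mulVec (fun k => pd k f x))) i) * Real.exp (-(f x))
          + η * ∑ j : Fin d,
              pd j (fun y => ((P y ^ 2) * Sg y) j i * Real.exp (-(f y))) x) θ = 0 := by
  have hηne : η ≠ 0 := hη.ne'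
  have hfd : Differentiable ℝ f := hf.differentiable (by simp)
  have hρd : Differentiable ℝ (fun x => Real.exp (-(f x))) := fun x => ((hfd x).neg.exp)
  have hρpd : ∀ (j : Fin d) x, pd j (fun y => Real.exp (-(f y))) x
      = -(pd j f x) * Real.exp (-(f x)) := by
    intro j x
    have h : HasFDerivAt (fun y => Real.exp (-(f y)))
        (Real.exp (-(f x)) • (-(fderiv ℝ f x))) x := ((hfd x).hasFDerivAt.neg).exp
    simp only [pd, h.fderiv]
    simp [pd, mul_comm]
  have hkey : ∀ x, (P x) ^ 2 * Sg x = η⁻¹ • P x := by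
    intro x
    have hu : IsUnit (Sg x).det := isUnit_iff_ne_zero.mpr (hSgpd x).det_pos.ne'
    have hP : P x = η⁻¹ • (Sg x)⁻¹ := by
      rw [← hprec x, smul_smul, inv_mul_cancel₀ hηne, one_smul]
    rw [hP, sq]
    simp [Matrix.smul_mul, Matrix.mul_smul, smul_smul, Matrix.mul_assoc,
      Matrix.nonsing_inv_mul _ hu]
  intro θ
  have hzero : ∀ (i : Fin d) (x : Fin d → ℝ),
      -((-((P x).mulVec (fun k => pd k f x))) i) * Real.exp (-(f x))
        + η * ∑ j : Fin d, pd j (fun y => ((P y ^ 2) * Sg y) j i * Real.exp (-(f y))) x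
      = 0 := by
    intro i x
    have hPdiff : ∀ j k, DifferentiableAt ℝ (fun y => P y j k) x :=
      fun j k => ((hPsmooth j k).differentiable (by simp)) x
    -- rewrite the inner pd's
    have h1 : ∀ j : Fin d,
        pd j (fun y => ((P y ^ 2) * Sg y) j i * Real.exp (-(f y))) x
        = η⁻¹ * (pd j (fun y => P y j i) x * Real.exp (-(f x))
            + P x j i * (-(pd j f x) * Real.exp (-(f x)))) := by
      intro j
      have he : (fun y => ((P y ^ 2) * Sg y) j i * Real.exp (-(f y)))
          = fun y => η⁻¹ * (P y j i * Real.exp (-(f y))) := by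
        funext y
        rw [hkey y]
        simp [Matrix.smul_apply, mul_assoc]
      rw [he, pd_const_mul _ _ (fun y => P y j i * Real.exp (-(f y))) _ ((hPdiff j i).mul (hρd x)),
          pd_mul _ _ _ _ (hPdiff j i) (hρd x), hρpd j x]
    -- divergence of P columns vanishes
    have h2 : ∑ j : Fin d, pd j (fun y => P y j i) x = 0 := by
      have h3 : ∀ j : Fin d, pd j (fun y => (Sg y)⁻¹ j i) x = η * pd j (fun y => P y j i) x := by
        intro j
        have he : (fun y => (Sg y)⁻¹ j i) = fun y => η * P y j i := by
          funext y
          rw [← hprec y]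
          simp [Matrix.smul_apply]
        rw [he, pd_const_mul _ _ _ _ (hPdiff j i)]
      have := hdiv x i
      rw [Finset.sum_congr rfl (fun j _ => h3 j), ← Finset.mul_sum] at this
      exact (mul_eq_zero.mp this).resolve_left hηne
    -- symmetry of P
    have hsym : ∀ j, P x j i = P x i j := by
      intro j
      have := (hPsym x)
      rw [Matrix.IsSymm] at this
      conv_lhs => rw [← this]
      simp [Matrix.transpose_apply]
    rw [Finset.sum_congr rfl (fun j _ => h1 j), ← Finset.mul_sum, ← mul_assoc,
        mul_inv_cancel₀ hηne, one_mul, Finset.sum_add_distrib, ← Finset.sum_mul, h2]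
    have e1 : ∀ j : Fin d, P x j i * (-(pd j f x) * Real.exp (-(f x)))
        = -(P x i j * pd j f x * Real.exp (-(f x))) := fun j => by rw [hsym j]; ring
    rw [Finset.sum_congr rfl (fun j _ => e1 j)]
    simp [Matrix.mulVec, dotProduct, Finset.sum_mul]
  have hz : ∀ i : Fin d, pd i (fun x =>
      -((-((P x).mulVec (fun k => pd k f x))) i) * Real.exp (-(f x))
        + η * ∑ j : Fin d,
            pd j (fun y => ((P y ^ 2) * Sg y) j i * Real.exp (-(f y))) x) θ = 0 := by
    intro i
    have : (fun x =>
        -((-((P x).mulVec (fun k => pd k f x))) i) * Real.exp (-(f x))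
          + η * ∑ j : Fin d,
              pd j (fun y => ((P y ^ 2) * Sg y) j i * Real.exp (-(f y))) x)
        = fun _ => (0 : ℝ) := funext (fun x => hzero i x)
    rw [this]
    simp [pd]
  exact Finset.sum_eq_zero (fun i _ => hz i)
end

section
/- Let f : ℝ^d → ℝ be smooth with ∫ exp(-f) < ∞, and let the joint density on (θ, r) ∈ ℝ^d × ℝ^d be ρ(θ, r) = exp(-f(θ) - ½rᵀM⁻¹r) with M symmetric positive definite. If P(θ) is a smooth symmetric matrix field with ∇ᵀP(θ) = 0, and A(θ) = η P(θ)²Σ(θ) with Σ symmetric, then ρ is a stationary solution of the Fokker–Planck equation associated with the underdamped Langevin system dθ = PM⁻¹r dt, dr = -(AM⁻¹r + P∇f)dt + √(2ηP²Σ)dW. -/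
open Matrix MeasureTheory

/-- Partial derivative with respect to `θᵢ` on phase space. -/
noncomputable def pdθ {d : ℕ} (i : Fin d)
    (g : (Fin d → ℝ) × (Fin d → ℝ) → ℝ) (z : (Fin d → ℝ) × (Fin d → ℝ)) : ℝ :=
  fderiv ℝ g z (Pi.single i 1, 0)

/-- Partial derivative with respect to `rᵢ` on phase space. -/
noncomputable def pdr {d : ℕ} (i : Fin d)
    (g : (Fin d → ℝ) × (Fin d → ℝ) → ℝ) (z : (Fin d → ℝ) × (Fin d → ℝ)) : ℝ :=
  fderiv ℝ g z (0, Pi.single i 1)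

noncomputable section FPaux

variable {d : ℕ}

/-- directional derivative on phase space -/
def pder (e : (Fin d → ℝ) × (Fin d → ℝ)) (g : (Fin d → ℝ) × (Fin d → ℝ) → ℝ)
    (z : (Fin d → ℝ) × (Fin d → ℝ)) : ℝ := fderiv ℝ g z e

variable {e z : (Fin d → ℝ) × (Fin d → ℝ)} {u v : (Fin d → ℝ) × (Fin d → ℝ) → ℝ}

lemma pdθ_pder (i : Fin d) (g : (Fin d → ℝ) × (Fin d → ℝ) → ℝ) (z) :
    pdθ i g z = pder (Pi.single i 1, 0) g z := rfl

lemma pdr_pder (i : Fin d) (g : (Fin d → ℝ) × (Fin d → ℝ) → ℝ) (z) :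
    pdr i g z = pder (0, Pi.single i 1) g z := rfl

lemma pder_add (hu : DifferentiableAt ℝ u z) (hv : DifferentiableAt ℝ v z) :
    pder e (fun w => u w + v w) z = pder e u z + pder e v z := by
  unfold pder; rw [fderiv_fun_add hu hv]; rfl

lemma pder_mul (hu : DifferentiableAt ℝ u z) (hv : DifferentiableAt ℝ v z) :
    pder e (fun w => u w * v w) z = u z * pder e v z + v z * pder e u z := by
  unfold pder; rw [fderiv_fun_mul hu hv]; rfl

lemma pder_neg : pder e (fun w => -(u w)) z = -pder e u z := by
  unfold pder; rw [fderiv_fun_neg]; rfl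

lemma pder_sub (hu : DifferentiableAt ℝ u z) (hv : DifferentiableAt ℝ v z) :
    pder e (fun w => u w - v w) z = pder e u z - pder e v z := by
  unfold pder; rw [fderiv_fun_sub hu hv]; rfl

lemma pder_sum {ι : Type*} {s : Finset ι} {F : ι → _ → ℝ}
    (h : ∀ i ∈ s, DifferentiableAt ℝ (F i) z) :
    pder e (fun w => ∑ i ∈ s, F i w) z = ∑ i ∈ s, pder e (F i) z := by
  unfold pder; rw [fderiv_fun_sum h]; simp

lemma pder_const (c : ℝ) : pder e (fun _ => c) z = 0 := by
  unfold pder; rw [fderiv_fun_const]; rfl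

lemma pder_const_mul (c : ℝ) (hu : DifferentiableAt ℝ u z) :
    pder e (fun w => c * u w) z = c * pder e u z := by
  unfold pder; rw [fderiv_const_mul hu]; rfl

lemma pder_exp (hu : DifferentiableAt ℝ u z) :
    pder e (fun w => Real.exp (u w)) z = Real.exp (u z) * pder e u z := by
  unfold pder; rw [fderiv_exp hu]; rfl

lemma pder_fst {q : (Fin d → ℝ) → ℝ} (hq : DifferentiableAt ℝ q z.1) :
    pder e (fun w => q w.1) z = fderiv ℝ q z.1 e.1 := by
  have : HasFDerivAt (fun w : (Fin d → ℝ) × (Fin d → ℝ) => q w.1)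
      ((fderiv ℝ q z.1).comp (ContinuousLinearMap.fst ℝ _ _)) z :=
    hq.hasFDerivAt.comp z hasFDerivAt_fst
  unfold pder; rw [this.fderiv]; rfl

lemma pder_snd_coord (j : Fin d) :
    pder e (fun w => w.2 j) z = e.2 j := by
  have : HasFDerivAt (fun w : (Fin d → ℝ) × (Fin d → ℝ) => w.2 j)
      ((ContinuousLinearMap.proj j).comp (ContinuousLinearMap.snd ℝ _ _)) z :=
    (((ContinuousLinearMap.proj j).comp
      (ContinuousLinearMap.snd ℝ (Fin d → ℝ) (Fin d → ℝ)))).hasFDerivAt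
  unfold pder; rw [this.fderiv]; rfl

variable {f : (Fin d → ℝ) → ℝ} {N : Matrix (Fin d) (Fin d) ℝ}

end FPaux

lemma fderiv_single_pd {d : ℕ} (q : (Fin d → ℝ) → ℝ) (θ : Fin d → ℝ) (i : Fin d) :
    fderiv ℝ q θ (Pi.single i 1) = pd i q θ := rfl

lemma fp_alg {d : ℕ} (η R : ℝ) (Pm Nm cc Dm : Fin d → Fin d → ℝ) (L g : Fin d → ℝ)
    (hPm : ∀ a b, Pm a b = Pm b a)
    (hdiv : ∀ j, ∑ i, Dm i j = 0) :
    -(∑ x, (∑ x_1, Pm x x_1 * L x_1) * (R * -g x)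
        + ∑ x, R * ∑ x_1, L x_1 * Dm x x_1)
      + (∑ x, ((∑ x_1, (η * cc x x_1) * L x_1) + ∑ x_1, Pm x x_1 * g x_1)
            * (R * -(1 / 2 * (L x + L x)))
          + ∑ x, R * ∑ x_1, (η * cc x x_1) * Nm x_1 x)
      + η * ∑ x, ∑ x_1, cc x x_1 *
            (R * -(1 / 2 * (2 * Nm x_1 x))
              + -(1 / 2 * (L x_1 + L x_1)) * (R * -(1 / 2 * (L x + L x)))) = 0 := by
  have h2 : ∑ x : Fin d, R * ∑ x_1, L x_1 * Dm x x_1 = 0 := by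
    simp only [Finset.mul_sum]
    rw [Finset.sum_comm]
    refine Finset.sum_eq_zero fun j _ => ?_
    calc ∑ i, R * (L j * Dm i j) = (R * L j) * ∑ i, Dm i j := by
          rw [Finset.mul_sum]; exact Finset.sum_congr rfl fun i _ => by ring
      _ = 0 := by rw [hdiv j, mul_zero]
  have hS1 : ∑ x : Fin d, (∑ x_1, Pm x x_1 * L x_1) * (R * -g x)
      = ∑ x, ∑ x_1, -(Pm x x_1 * L x_1 * g x * R) := by
    refine Finset.sum_congr rfl fun x _ => ?_
    rw [Finset.sum_mul]; exact Finset.sum_congr rfl fun y _ => by ring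
  have h5 : ∑ x : Fin d, (∑ x_1, Pm x x_1 * g x_1) * (R * -(1 / 2 * (L x + L x)))
      = ∑ x, ∑ x_1, -(Pm x x_1 * L x_1 * g x * R) := by
    simp only [Finset.sum_mul]
    rw [Finset.sum_comm]
    refine Finset.sum_congr rfl fun x _ => Finset.sum_congr rfl fun y _ => ?_
    rw [hPm y x]; ring
  have hS3a : ∑ x : Fin d, (∑ x_1, (η * cc x x_1) * L x_1) * (R * -(1 / 2 * (L x + L x)))
      = ∑ x, ∑ x_1, -(η * cc x x_1 * L x_1 * L x * R) := by
    refine Finset.sum_congr rfl fun x _ => ?_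
    rw [Finset.sum_mul]; exact Finset.sum_congr rfl fun y _ => by ring
  have hS4 : ∑ x : Fin d, R * ∑ x_1, (η * cc x x_1) * Nm x_1 x
      = ∑ x, ∑ x_1, η * cc x x_1 * Nm x_1 x * R := by
    refine Finset.sum_congr rfl fun x _ => ?_
    rw [Finset.mul_sum]; exact Finset.sum_congr rfl fun y _ => by ring
  have hS5 : η * ∑ x : Fin d, ∑ x_1, cc x x_1 *
        (R * -(1 / 2 * (2 * Nm x_1 x))
          + -(1 / 2 * (L x_1 + L x_1)) * (R * -(1 / 2 * (L x + L x))))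
      = -(∑ x, ∑ x_1, η * cc x x_1 * Nm x_1 x * R)
        - ∑ x, ∑ x_1, -(η * cc x x_1 * L x_1 * L x * R) := by
    have step : ∀ x x_1 : Fin d, η * (cc x x_1 *
        (R * -(1 / 2 * (2 * Nm x_1 x))
          + -(1 / 2 * (L x_1 + L x_1)) * (R * -(1 / 2 * (L x + L x)))))
        = -(η * cc x x_1 * Nm x_1 x * R) - -(η * cc x x_1 * L x_1 * L x * R) :=
      fun x y => by ring
    rw [Finset.mul_sum]
    calc ∑ x, η * ∑ x_1, cc x x_1 * _
        = ∑ x : Fin d, ∑ x_1 : Fin d, (-(η * cc x x_1 * Nm x_1 x * R)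
            - -(η * cc x x_1 * L x_1 * L x * R)) := by
          refine Finset.sum_congr rfl fun x _ => ?_
          rw [Finset.mul_sum]; exact Finset.sum_congr rfl fun y _ => step x y
      _ = _ := by
          simp only [Finset.sum_sub_distrib]
          rw [← Finset.sum_neg_distrib]
          simp only [Finset.sum_neg_distrib]
  simp only [add_mul, Finset.sum_add_distrib]
  rw [h2, hS1, h5, hS3a, hS4, hS5]
  ring

set_option maxHeartbeats 2000000 in
/-- Theorem 2: the density `ρ(θ,r) = exp(-f(θ) - ½ rᵀ M⁻¹ r)` is stationary for the
Fokker–Planck equation of the underdamped Langevin system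
`dθ = P M⁻¹ r dt`, `dr = -(A M⁻¹ r + P ∇f) dt + √(2 η P² Σ) dW`
when `∇ᵀP = 0` and `A = η P² Σ`. -/
theorem stmt8 {d : ℕ} (η : ℝ) (hη : 0 < η)
    (f : (Fin d → ℝ) → ℝ) (hf : ContDiff ℝ (⊤ : ℕ∞) f)
    (hfint : Integrable (fun θ : Fin d → ℝ => Real.exp (-(f θ))))
    (M : Matrix (Fin d) (Fin d) ℝ) (hMsym : M.IsSymm) (hMpd : M.PosDef)
    (P Sg : (Fin d → ℝ) → Matrix (Fin d) (Fin d) ℝ)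
    (hPsmooth : ∀ a b, ContDiff ℝ (⊤ : ℕ∞) (fun θ => P θ a b))
    (hSgsmooth : ∀ a b, ContDiff ℝ (⊤ : ℕ∞) (fun θ => Sg θ a b))
    (hPsym : ∀ θ, (P θ).IsSymm) (hSgsym : ∀ θ, (Sg θ).IsSymm)
    (hPdiv : ∀ θ (j : Fin d), ∑ i : Fin d, pd i (fun x => P x i j) θ = 0)
    (A : (Fin d → ℝ) → Matrix (Fin d) (Fin d) ℝ)
    (hA : ∀ θ, A θ = η • (P θ ^ 2 * Sg θ)) :
    ∀ z : (Fin d → ℝ) × (Fin d → ℝ),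
      -(∑ i : Fin d, pdθ i (fun w =>
          (P w.1).mulVec (M⁻¹.mulVec w.2) i *
            Real.exp (-(f w.1) - 1 / 2 * (w.2 ⬝ᵥ M⁻¹.mulVec w.2))) z)
        + (∑ i : Fin d, pdr i (fun w =>
            ((A w.1).mulVec (M⁻¹.mulVec w.2) i
              + (P w.1).mulVec (fun k => pd k f w.1) i) *
              Real.exp (-(f w.1) - 1 / 2 * (w.2 ⬝ᵥ M⁻¹.mulVec w.2))) z)
        + η * ∑ i : Fin d, ∑ j : Fin d,
            pdr i (fun w => pdr j (fun v =>
              (P v.1 ^ 2 * Sg v.1) i j *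
                Real.exp (-(f v.1) - 1 / 2 * (v.2 ⬝ᵥ M⁻¹.mulVec v.2))) w) z
        = 0 := by
  intro z
  have hfd : Differentiable ℝ f := hf.differentiable (by simp)
  have hPd : ∀ a b, Differentiable ℝ fun θ => P θ a b :=
    fun a b => (hPsmooth a b).differentiable (by simp)
  have hSgd : ∀ a b, Differentiable ℝ fun θ => Sg θ a b :=
    fun a b => (hSgsmooth a b).differentiable (by simp)
  have hpdf : ∀ k, Differentiable ℝ fun θ => pd k f θ :=
    fun k => ((hf.fderiv_right (m := 1) (by exact WithTop.coe_le_coe.mpr le_top)).clm_apply contDiff_const).differentiable (by simp)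
  simp only [hA, Matrix.smul_apply, smul_eq_mul, pow_two, Matrix.mul_apply,
    Matrix.mulVec, dotProduct]
  have hPpder : ∀ (a b : Fin d) (e w), pder e (fun w => P w.1 a b) w
      = fderiv ℝ (fun θ => P θ a b) w.1 e.1 := fun a b e w => pder_fst (hPd a b w.1)
  have hSgpder : ∀ (a b : Fin d) (e w), pder e (fun w => Sg w.1 a b) w
      = fderiv ℝ (fun θ => Sg θ a b) w.1 e.1 := fun a b e w => pder_fst (hSgd a b w.1)
  simp (disch := fun_prop) only [pdθ_pder, pdr_pder, pder_mul, pder_add, pder_sub,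
    pder_neg, pder_exp, pder_sum, pder_const_mul, pder_const, pder_snd_coord, pder_fst,
    hPpder, hSgpder, map_zero, fderiv_single_pd, Pi.zero_apply, Pi.single_apply,
    mul_zero, zero_mul, add_zero, zero_add, mul_one, mul_ite, ite_mul,
    Finset.sum_ite_eq, Finset.sum_ite_eq', Finset.mem_univ, if_true,
    Finset.sum_const_zero, sub_zero, zero_sub, neg_zero, Finset.sum_add_distrib]
  have hNe : ∀ a b, M⁻¹ a b = M⁻¹ b a := by
    intro a b
    have h : M⁻¹ᵀ = M⁻¹ := by
      rw [Matrix.transpose_nonsing_inv, hMsym]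
    conv_lhs => rw [← h]
    exact Matrix.transpose_apply _ _ _
  have hL : ∀ j, (∑ x, z.2 x * M⁻¹ x j) = ∑ x, M⁻¹ j x * z.2 x := by
    intro j
    exact Finset.sum_congr rfl fun k _ => by rw [hNe k j]; ring
  have hNd : ∀ a b, M⁻¹ a b + M⁻¹ b a = 2 * M⁻¹ b a := by
    intro a b; rw [hNe a b]; ring
  simp only [hL, hNd]
  have hPe : ∀ a b, P z.1 a b = P z.1 b a := by
    intro a b
    conv_lhs => rw [← hPsym z.1]
    exact Matrix.transpose_apply _ _ _
  exact fp_alg η (Real.exp (-f z.1 - 1 / 2 * ∑ x, z.2 x * ∑ x_1, M⁻¹ x x_1 * z.2 x_1))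
    (fun a b => P z.1 a b) (fun a b => M⁻¹ a b)
    (fun a b => ∑ x_2, (∑ j, P z.1 a j * P z.1 j x_2) * Sg z.1 x_2 b)
    (fun a b => pd a (fun θ => P θ a b) z.1)
    (fun j => ∑ x, M⁻¹ j x * z.2 x) (fun x => pd x f z.1)
    hPe (fun j => hPdiv z.1 j)
end

section
/- If P(θ) is a constant matrix field, then ∇ᵀP(θ) = 0; consequently, for SGHMC with P = I, A(θ) = ηΣ(θ) (with Σ symmetric), mass M symmetric positive definite, the density exp(-f(θ) - ½rᵀM⁻¹r) is stationary for the Fokker–Planck equation 0 = -∇_θ·(M⁻¹r ρ) + ∇_r·((ηΣ(θ)M⁻¹r + ∇f(θ))ρ) + η Σ_{ij} Σ_{ij}(θ) ∂_{r_i}∂_{r_j}ρ. -/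
open Matrix

abbrev E (d : ℕ) := (Fin d → ℝ) × (Fin d → ℝ)

noncomputable def rp (d : ℕ) (j : Fin d) : E d →L[ℝ] ℝ :=
  (ContinuousLinearMap.proj j).comp (ContinuousLinearMap.snd ℝ (Fin d → ℝ) (Fin d → ℝ))

lemma rp_apply (j : Fin d) (v : E d) : rp d j v = v.2 j := rfl

lemma hasFDerivAt_rp (j : Fin d) (z : E d) : HasFDerivAt (fun w : E d => w.2 j) (rp d j) z :=
  (rp d j).hasFDerivAt

noncomputable def mv (A : Matrix (Fin d) (Fin d) ℝ) (j : Fin d) : E d →L[ℝ] ℝ :=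
  ∑ k, A j k • rp d k

lemma mv_apply (A : Matrix (Fin d) (Fin d) ℝ) (j : Fin d) (v : E d) :
    mv A j v = A.mulVec v.2 j := by
  simp [mv, Matrix.mulVec, dotProduct, rp_apply]

lemma hasFDerivAt_mv (A : Matrix (Fin d) (Fin d) ℝ) (j : Fin d) (z : E d) :
    HasFDerivAt (fun w : E d => A.mulVec w.2 j) (mv A j) z := by
  have h : (fun w : E d => A.mulVec w.2 j) = fun w => ∑ k, A j k * w.2 k := by
    funext w; simp [Matrix.mulVec, dotProduct]
  rw [h, mv]
  exact HasFDerivAt.fun_sum fun k _ => (hasFDerivAt_rp k z).const_mul (A j k)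

noncomputable def Dq (A : Matrix (Fin d) (Fin d) ℝ) (z : E d) : E d →L[ℝ] ℝ :=
  ∑ k, (z.2 k • mv A k + A.mulVec z.2 k • rp d k)

lemma hasFDerivAt_q (A : Matrix (Fin d) (Fin d) ℝ) (z : E d) :
    HasFDerivAt (fun w : E d => w.2 ⬝ᵥ A.mulVec w.2) (Dq A z) z := by
  have h : (fun w : E d => w.2 ⬝ᵥ A.mulVec w.2) = fun w => ∑ k, w.2 k * A.mulVec w.2 k := by
    funext w; simp [dotProduct]
  rw [h, Dq]
  exact HasFDerivAt.fun_sum fun k _ => (hasFDerivAt_rp k z).fun_mul (hasFDerivAt_mv A k z)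

noncomputable def DG (f : (Fin d → ℝ) → ℝ) (A : Matrix (Fin d) (Fin d) ℝ) (z : E d) :
    E d →L[ℝ] ℝ :=
  -((fderiv ℝ f z.1).comp (ContinuousLinearMap.fst ℝ (Fin d → ℝ) (Fin d → ℝ)))
    - (1 / 2 : ℝ) • Dq A z

lemma hasFDerivAt_rho (f : (Fin d → ℝ) → ℝ) (hf : ContDiff ℝ (⊤ : ℕ∞) f)
    (A : Matrix (Fin d) (Fin d) ℝ) (z : E d) :
    HasFDerivAt (fun w : E d => Real.exp (-(f w.1) - 1 / 2 * (w.2 ⬝ᵥ A.mulVec w.2)))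
      (Real.exp (-(f z.1) - 1 / 2 * (z.2 ⬝ᵥ A.mulVec z.2)) • DG f A z) z := by
  have h1 : HasFDerivAt (fun w : E d => f w.1)
      ((fderiv ℝ f z.1).comp (ContinuousLinearMap.fst ℝ (Fin d → ℝ) (Fin d → ℝ))) z :=
    ((hf.differentiable (by simp) z.1).hasFDerivAt).comp z hasFDerivAt_fst
  exact (h1.neg.sub ((hasFDerivAt_q A z).const_mul (1 / 2))).exp

lemma mvso (A : Matrix (Fin d) (Fin d) ℝ) (k i : Fin d) :
    A.mulVec (Pi.single i 1) k = A k i := by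
  simp [Matrix.mulVec_single]

lemma DG_apply_theta (f : (Fin d → ℝ) → ℝ) (A : Matrix (Fin d) (Fin d) ℝ) (z : E d) (i : Fin d) :
    DG f A z (Pi.single i 1, (0 : Fin d → ℝ)) = -(fderiv ℝ f z.1 (Pi.single i 1)) := by
  simp [DG, Dq, mv, rp]

lemma DG_apply_r (f : (Fin d → ℝ) → ℝ) (A : Matrix (Fin d) (Fin d) ℝ) (hA : Aᵀ = A)
    (z : E d) (i : Fin d) :
    DG f A z ((0 : Fin d → ℝ), Pi.single i 1) = -(A.mulVec z.2 i) := by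
  have key : ∑ k, z.2 k * A k i = A.mulVec z.2 i := by
    conv_rhs => rw [← hA]
    simp [Matrix.mulVec, dotProduct, Matrix.transpose_apply, mul_comm]
  simp only [DG, ContinuousLinearMap.sub_apply, ContinuousLinearMap.neg_apply,
    ContinuousLinearMap.comp_apply, ContinuousLinearMap.coe_fst', ContinuousLinearMap.smul_apply,
    Dq, ContinuousLinearMap.sum_apply, ContinuousLinearMap.add_apply]
  simp [mv_apply, rp_apply, mvso, Pi.single_apply, key]
  rw [Finset.sum_add_distrib, key, Finset.sum_ite_eq' Finset.univ i (fun x => (A *ᵥ z.2) x)]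
  simp; ring


section terms

variable (f : (Fin d → ℝ) → ℝ) (A : Matrix (Fin d) (Fin d) ℝ)

lemma pdθ_term1 (hf : ContDiff ℝ (⊤ : ℕ∞) f) (z : E d) (i : Fin d) :
    pdθ i (fun w => A.mulVec w.2 i * Real.exp (-(f w.1) - 1 / 2 * (w.2 ⬝ᵥ A.mulVec w.2))) z
      = A.mulVec z.2 i *
          (Real.exp (-(f z.1) - 1 / 2 * (z.2 ⬝ᵥ A.mulVec z.2)) * -(pd i f z.1)) := by
  have h := (hasFDerivAt_mv A i z).fun_mul (hasFDerivAt_rho f hf A z)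
  rw [pdθ, h.fderiv]
  simp [mv_apply, DG_apply_theta, pd, Matrix.mulVec_zero]

lemma pdr_rho (hf : ContDiff ℝ (⊤ : ℕ∞) f) (hA : Aᵀ = A) (i : Fin d) (v : E d) :
    pdr i (fun w => Real.exp (-(f w.1) - 1 / 2 * (w.2 ⬝ᵥ A.mulVec w.2))) v
      = -(A.mulVec v.2 i) * Real.exp (-(f v.1) - 1 / 2 * (v.2 ⬝ᵥ A.mulVec v.2)) := by
  rw [pdr, (hasFDerivAt_rho f hf A v).fderiv]
  simp [DG_apply_r f A hA]
  ring

lemma pdr_term3 (hf : ContDiff ℝ (⊤ : ℕ∞) f) (hA : Aᵀ = A) (z : E d) (i j : Fin d) :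
    pdr i (fun w => pdr j
        (fun v => Real.exp (-(f v.1) - 1 / 2 * (v.2 ⬝ᵥ A.mulVec v.2))) w) z
      = (A.mulVec z.2 j * A.mulVec z.2 i - A j i) *
          Real.exp (-(f z.1) - 1 / 2 * (z.2 ⬝ᵥ A.mulVec z.2)) := by
  have he : (fun w => pdr j
      (fun v => Real.exp (-(f v.1) - 1 / 2 * (v.2 ⬝ᵥ A.mulVec v.2))) w)
      = fun w => -(A.mulVec w.2 j) *
          Real.exp (-(f w.1) - 1 / 2 * (w.2 ⬝ᵥ A.mulVec w.2)) :=
    funext (pdr_rho f A hf hA j)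
  rw [he]
  have h := ((hasFDerivAt_mv A j z).fun_neg).fun_mul (hasFDerivAt_rho f hf A z)
  rw [pdr, h.fderiv]
  simp [mv_apply, DG_apply_r f A hA, mulVec_single_one]
  ring

lemma pdr_term2 (hf : ContDiff ℝ (⊤ : ℕ∞) f) (hA : Aᵀ = A) (η : ℝ)
    (Sg : (Fin d → ℝ) → Matrix (Fin d) (Fin d) ℝ)
    (hSgsmooth : ∀ a b, ContDiff ℝ (⊤ : ℕ∞) (fun θ => Sg θ a b)) (z : E d) (i : Fin d) :
    pdr i (fun w => ((η • Sg w.1).mulVec (A.mulVec w.2) i + pd i f w.1) *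
        Real.exp (-(f w.1) - 1 / 2 * (w.2 ⬝ᵥ A.mulVec w.2))) z
      = ((η • Sg z.1).mulVec (A.mulVec z.2) i + pd i f z.1) *
          (Real.exp (-(f z.1) - 1 / 2 * (z.2 ⬝ᵥ A.mulVec z.2)) * -(A.mulVec z.2 i))
        + Real.exp (-(f z.1) - 1 / 2 * (z.2 ⬝ᵥ A.mulVec z.2)) *
            (∑ j, (η * Sg z.1 i j) * A j i) := by
  have hfd : ∀ j, HasFDerivAt (fun w : E d => η * Sg w.1 i j)
      (η • ((fderiv ℝ (fun θ => Sg θ i j) z.1).comp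
        (ContinuousLinearMap.fst ℝ (Fin d → ℝ) (Fin d → ℝ)))) z := fun j =>
    ((((hSgsmooth i j).differentiable (by simp) z.1).hasFDerivAt.comp z
      hasFDerivAt_fst).const_mul η)
  have hs := HasFDerivAt.fun_sum (fun j (_ : j ∈ Finset.univ) => (hfd j).fun_mul (hasFDerivAt_mv A j z))
  have hrw : (fun w : E d => (η • Sg w.1).mulVec (A.mulVec w.2) i)
      = fun w => ∑ j, (η * Sg w.1 i j) * A.mulVec w.2 j := by
    funext w
    simp [Matrix.mulVec, dotProduct, Matrix.smul_apply, smul_eq_mul]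
  have hpdc : Differentiable ℝ (pd i f) := by
    have h1 : ContDiff ℝ (⊤ : ℕ∞) (fderiv ℝ f) := hf.fderiv_right (by simp)
    exact (h1.clm_apply contDiff_const).differentiable (by simp)
  have hpdf : HasFDerivAt (fun w : E d => pd i f w.1)
      ((fderiv ℝ (pd i f) z.1).comp (ContinuousLinearMap.fst ℝ (Fin d → ℝ) (Fin d → ℝ))) z :=
    (hpdc z.1).hasFDerivAt.comp z hasFDerivAt_fst
  have hs' : HasFDerivAt (fun w : E d => ((η • Sg w.1) *ᵥ (A *ᵥ w.2)) i)
      (∑ j : Fin d, ((η * Sg z.1 i j) • mv A j +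
        (A *ᵥ z.2) j • η • (fderiv ℝ (fun θ => Sg θ i j) z.1).comp
          (ContinuousLinearMap.fst ℝ (Fin d → ℝ) (Fin d → ℝ)))) z := by
    rw [hrw]; exact hs
  have hφ := hs'.fun_add hpdf
  have h := hφ.fun_mul (hasFDerivAt_rho f hf A z)
  rw [pdr, h.fderiv]
  simp [mv_apply, DG_apply_r f A hA, mvso, hrw]

end terms

/-- Constant matrix fields have vanishing column divergences; consequently, for
SGHMC with `P = I` and `A = η Σ(θ)`, the density `exp(-f(θ) - ½ rᵀ M⁻¹ r)` is
stationary for the associated Fokker–Planck equation. -/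
theorem stmt19 {d : ℕ} (η : ℝ) (hη : 0 < η)
    (f : (Fin d → ℝ) → ℝ) (hf : ContDiff ℝ (⊤ : ℕ∞) f)
    (M : Matrix (Fin d) (Fin d) ℝ) (hMsym : M.IsSymm) (hMpd : M.PosDef)
    (Sg : (Fin d → ℝ) → Matrix (Fin d) (Fin d) ℝ)
    (hSgsmooth : ∀ a b, ContDiff ℝ (⊤ : ℕ∞) (fun θ => Sg θ a b))
    (hSgsym : ∀ θ, (Sg θ).IsSymm) :
    (∀ (P : (Fin d → ℝ) → Matrix (Fin d) (Fin d) ℝ)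
        (P₀ : Matrix (Fin d) (Fin d) ℝ), (∀ θ, P θ = P₀) →
        ∀ θ (j : Fin d), ∑ i : Fin d, pd i (fun x => P x i j) θ = 0) ∧
    (∀ z : (Fin d → ℝ) × (Fin d → ℝ),
        -(∑ i : Fin d, pdθ i (fun w =>
            M⁻¹.mulVec w.2 i *
              Real.exp (-(f w.1) - 1 / 2 * (w.2 ⬝ᵥ M⁻¹.mulVec w.2))) z)
          + (∑ i : Fin d, pdr i (fun w =>
              ((η • Sg w.1).mulVec (M⁻¹.mulVec w.2) i + pd i f w.1) *
                Real.exp (-(f w.1) - 1 / 2 * (w.2 ⬝ᵥ M⁻¹.mulVec w.2))) z)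
          + η * ∑ i : Fin d, ∑ j : Fin d,
              Sg z.1 i j * pdr i (fun w => pdr j (fun v =>
                Real.exp (-(f v.1) - 1 / 2 * (v.2 ⬝ᵥ M⁻¹.mulVec v.2))) w) z
          = 0) := by
  
  constructor
  · intro P P₀ hP θ j
    apply Finset.sum_eq_zero
    intro i _
    have hc : (fun x => P x i j) = fun _ => P₀ i j := funext fun x => by rw [hP]
    rw [pd, hc]
    simp
  · intro z
    have hA : (M⁻¹)ᵀ = M⁻¹ := by rw [Matrix.transpose_nonsing_inv, hMsym.eq]
    rw [Finset.sum_congr rfl fun i _ => pdθ_term1 f M⁻¹ hf z i,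
        Finset.sum_congr rfl fun i _ => pdr_term2 f M⁻¹ hf hA η Sg hSgsmooth z i,
        Finset.sum_congr rfl fun i _ => Finset.sum_congr rfl fun j _ => by
          rw [pdr_term3 f M⁻¹ hf hA z i j]]
    have hS : ∀ i, ((η • Sg z.1) *ᵥ (M⁻¹ *ᵥ z.2)) i
        = η * ∑ j, Sg z.1 i j * (M⁻¹ *ᵥ z.2) j := by
      intro i
      simp [Matrix.mulVec, dotProduct, Finset.mul_sum, mul_assoc]
    rw [← Finset.sum_neg_distrib, Finset.mul_sum, ← Finset.sum_add_distrib,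
        ← Finset.sum_add_distrib]
    apply Finset.sum_eq_zero
    intro i _
    have h3 : ∑ j, Sg z.1 i j * (((M⁻¹ *ᵥ z.2) j * (M⁻¹ *ᵥ z.2) i - M⁻¹ j i) *
          Real.exp (-(f z.1) - 1 / 2 * (z.2 ⬝ᵥ M⁻¹ *ᵥ z.2)))
        = (∑ j, Sg z.1 i j * (M⁻¹ *ᵥ z.2) j) *
            ((M⁻¹ *ᵥ z.2) i * Real.exp (-(f z.1) - 1 / 2 * (z.2 ⬝ᵥ M⁻¹ *ᵥ z.2)))
          - (∑ j, Sg z.1 i j * M⁻¹ j i) *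
              Real.exp (-(f z.1) - 1 / 2 * (z.2 ⬝ᵥ M⁻¹ *ᵥ z.2)) := by
      rw [Finset.sum_mul, Finset.sum_mul, ← Finset.sum_sub_distrib]
      exact Finset.sum_congr rfl fun j _ => by ring
    have h2 : ∑ j, (η * Sg z.1 i j) * M⁻¹ j i = η * ∑ j, Sg z.1 i j * M⁻¹ j i := by
      simp [Finset.mul_sum, mul_assoc]
    rw [hS i, h3, h2]
    ring
end
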